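/- arXiv:1603.03708 — 3 statements merged into one kernel-verified Lean document; each statement's English description precedes it below -/
import Mathlib

section
/- For all integers k ≥ 4 and n ≥ 3, the inequality k^n ≤ binomial(kn - n, n) holds. -/
open Finset

lemma key_pair (j n a b : ℕ) (hn : 3 ≤ n) (hab : a + b = n + 1) (ha : 1 ≤ a) (hb : 1 ≤ b) :
    (4 + j) ^ 2 * (a * b) ≤ ((2 + j) * n + a) * ((2 + j) * n + b) := by
  zify
  have hj : (0:ℤ) ≤ (j:ℤ) := Int.natCast_nonneg j
  have hn' : (3:ℤ) ≤ (n:ℤ) := by exact_mod_cast hn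
  have hab' : (a:ℤ) + b = n + 1 := by exact_mod_cast hab
  have h4ab : 4 * ((a:ℤ) * b) ≤ ((n:ℤ) + 1) ^ 2 := by nlinarith [sq_nonneg ((a:ℤ) - b)]
  nlinarith [mul_nonneg (mul_nonneg (sub_nonneg.mpr hn') (by linarith : (0:ℤ) ≤ (n:ℤ)))
      (by positivity : (0:ℤ) ≤ 3 * (j:ℤ)^2 + 12 * j + 9),
    mul_nonneg (sub_nonneg.mpr hn') (by positivity : (0:ℤ) ≤ 7 * (j:ℤ)^2 + 24 * j + 5),
    mul_nonneg (by positivity : (0:ℤ) ≤ (j:ℤ)^2 + 8 * j + 15)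
      (by linarith : (0:ℤ) ≤ ((n:ℤ) + 1) ^ 2 - 4 * (a * b)), sq_nonneg ((j:ℤ))]

theorem stmt_0 (k n : ℕ) (hk : 4 ≤ k) (hn : 3 ≤ n) :
    k ^ n ≤ Nat.choose (k * n - n) n := by
  obtain ⟨j, rfl⟩ := Nat.exists_eq_add_of_le hk
  have hM : (4 + j) * n - n = (3 + j) * n := by
    have : (4 + j) * n = n + (3 + j) * n := by ring
    omega
  rw [hM]
  have hfac : 0 < n.factorial := n.factorial_pos
  have hmain : n.factorial * (4 + j) ^ n ≤ n.factorial * Nat.choose ((3 + j) * n) n := by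
    rw [← Nat.descFactorial_eq_factorial_mul_choose]
    set f : ℕ → ℕ := fun i => (4 + j) * (i + 1) with hf
    set g : ℕ → ℕ := fun i => (3 + j) * n - i with hg
    have hL : n.factorial * (4 + j) ^ n = ∏ i ∈ range n, f i := by
      rw [hf]
      rw [prod_mul_distrib, prod_const, card_range, prod_range_add_one_eq_factorial]
      ring
    have hR : ((3 + j) * n).descFactorial n = ∏ i ∈ range n, g i :=
      Nat.descFactorial_eq_prod_range _ _
    rw [hL, hR]
    have hsq : (∏ i ∈ range n, f i) ^ 2 ≤ (∏ i ∈ range n, g i) ^ 2 := by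
      have hfs : (∏ i ∈ range n, f i) ^ 2 = ∏ i ∈ range n, (f i * f (n - 1 - i)) := by
        rw [sq]
        nth_rewrite 2 [← Finset.prod_range_reflect f n]
        rw [← prod_mul_distrib]
      have hgs : (∏ i ∈ range n, g i) ^ 2 = ∏ i ∈ range n, (g i * g (n - 1 - i)) := by
        rw [sq]
        nth_rewrite 2 [← Finset.prod_range_reflect g n]
        rw [← prod_mul_distrib]
      rw [hfs, hgs]
      apply Finset.prod_le_prod'
      intro i hi
      rw [mem_range] at hi
      have e1 : f i * f (n - 1 - i) = (4 + j) ^ 2 * ((i + 1) * (n - i)) := by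
        simp only [hf]
        have : n - 1 - i + 1 = n - i := by omega
        rw [this]; ring
      have e2 : g i = (2 + j) * n + (n - i) := by
        simp only [hg]
        have : (3 + j) * n = (2 + j) * n + n := by ring
        omega
      have e3 : g (n - 1 - i) = (2 + j) * n + (i + 1) := by
        simp only [hg]
        have : (3 + j) * n = (2 + j) * n + n := by ring
        omega
      rw [e1, e2, e3, mul_comm ((2 + j) * n + (n - i))]
      exact key_pair j n (i + 1) (n - i) hn (by omega) (by omega) (by omega)
    by_contra hlt
    push_neg at hlt
    exact absurd hsq (Nat.pow_lt_pow_left hlt (by norm_num : (2:ℕ) ≠ 0)).not_ge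
  exact Nat.le_of_mul_le_mul_left hmain hfac
end

section
/- For all integers n ≥ 3, the inequality 4^n ≤ binomial(3n, n) holds. -/
lemma key_choose_id (n : ℕ) :
    (n + 1) * ((2 * n + 1) * (2 * n + 2)) * Nat.choose (3 * n + 3) (n + 1)
      = (3 * n + 1) * ((3 * n + 2) * (3 * n + 3)) * Nat.choose (3 * n) n := by
  have h1 := Nat.choose_mul_factorial_mul_factorial (show n ≤ 3 * n by omega)
  have h2 := Nat.choose_mul_factorial_mul_factorial (show n + 1 ≤ 3 * n + 3 by omega)
  have e1 : 3 * n - n = 2 * n := by omega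
  have e2 : 3 * n + 3 - (n + 1) = 2 * n + 2 := by omega
  rw [e1] at h1
  rw [e2] at h2
  have hf : 0 < Nat.factorial n * Nat.factorial (2 * n) :=
    Nat.mul_pos (Nat.factorial_pos _) (Nat.factorial_pos _)
  apply Nat.eq_of_mul_eq_mul_right hf
  have fa : Nat.factorial (n + 1) = (n + 1) * Nat.factorial n := Nat.factorial_succ n
  have fb : Nat.factorial (2 * n + 2) = (2 * n + 2) * ((2 * n + 1) * Nat.factorial (2 * n)) := by
    rw [show 2 * n + 2 = (2 * n + 1) + 1 by ring, Nat.factorial_succ, Nat.factorial_succ]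
  have fc : Nat.factorial (3 * n + 3)
      = (3 * n + 3) * ((3 * n + 2) * ((3 * n + 1) * Nat.factorial (3 * n))) := by
    rw [show 3 * n + 3 = (3 * n + 2) + 1 by ring, Nat.factorial_succ,
      show 3 * n + 2 = (3 * n + 1) + 1 by ring, Nat.factorial_succ, Nat.factorial_succ]
  calc (n + 1) * ((2 * n + 1) * (2 * n + 2)) * Nat.choose (3 * n + 3) (n + 1)
        * (Nat.factorial n * Nat.factorial (2 * n))
      = Nat.choose (3 * n + 3) (n + 1) * Nat.factorial (n + 1) * Nat.factorial (2 * n + 2) := by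
        rw [fa, fb]; ring
    _ = Nat.factorial (3 * n + 3) := h2
    _ = (3 * n + 1) * ((3 * n + 2) * (3 * n + 3))
        * (Nat.choose (3 * n) n * Nat.factorial n * Nat.factorial (2 * n)) := by
        rw [fc, h1]; ring
    _ = (3 * n + 1) * ((3 * n + 2) * (3 * n + 3)) * Nat.choose (3 * n) n
        * (Nat.factorial n * Nat.factorial (2 * n)) := by ring

theorem stmt_6 (n : ℕ) (hn : 3 ≤ n) : 4 ^ n ≤ Nat.choose (3 * n) n := by
  induction n, hn using Nat.le_induction with
  | base => decide
  | succ n hn ih =>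
    have hkey := key_choose_id n
    have hA : 0 < (n + 1) * ((2 * n + 1) * (2 * n + 2)) := by positivity
    have hratio : 4 * ((n + 1) * ((2 * n + 1) * (2 * n + 2)))
        ≤ (3 * n + 1) * ((3 * n + 2) * (3 * n + 3)) := by nlinarith
    have h : (n + 1) * ((2 * n + 1) * (2 * n + 2)) * 4 ^ (n + 1)
        ≤ (n + 1) * ((2 * n + 1) * (2 * n + 2)) * Nat.choose (3 * n + 3) (n + 1) := by
      rw [hkey]
      calc (n + 1) * ((2 * n + 1) * (2 * n + 2)) * 4 ^ (n + 1)
          = 4 * ((n + 1) * ((2 * n + 1) * (2 * n + 2))) * 4 ^ n := by ring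
        _ ≤ (3 * n + 1) * ((3 * n + 2) * (3 * n + 3)) * 4 ^ n :=
            Nat.mul_le_mul_right _ hratio
        _ ≤ (3 * n + 1) * ((3 * n + 2) * (3 * n + 3)) * Nat.choose (3 * n) n :=
            Nat.mul_le_mul_left _ ih
    have := Nat.le_of_mul_le_mul_left h hA
    simpa [show 3 * (n + 1) = 3 * n + 3 by ring] using this
end

section
/- Let n ≥ 2 and suppose that for (n-1)-dimensional projective space the following holds: for every m ≥ 1 there is no nonzero hypersurface of degree km - 1 passing through k^(n-1) general points with multiplicity m. Then for every m ≥ 1 there is no nonzero hypersurface of degree km - 1 in P^n passing through k^n general points with multiplicity m. -/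
open MvPolynomial

/-- The initial degree `α(I)`: the least degree of a nonzero homogeneous element of `I`. -/
noncomputable def alphaIdeal {F : Type} [Field F] {N : ℕ}
    (I : Ideal (MvPolynomial (Fin N) F)) : ℕ :=
  sInf {d : ℕ | ∃ f ∈ I, f ≠ 0 ∧ MvPolynomial.IsHomogeneous f d}

/-- The homogeneous vanishing ideal of the projective point with representative `p`. -/
noncomputable def pointIdeal {F : Type} [Field F] {N : ℕ} (p : Fin N → F) :
    Ideal (MvPolynomial (Fin N) F) :=
  Ideal.span {f | (∃ d, MvPolynomial.IsHomogeneous f d) ∧ MvPolynomial.eval p f = 0}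

/-- The radical ideal of the finite set of (projective) points `P`. -/
noncomputable def pointsIdeal {F : Type} [Field F] {N s : ℕ}
    (P : Fin s → Fin N → F) : Ideal (MvPolynomial (Fin N) F) :=
  ⨅ i, pointIdeal (P i)

/-- The `m`-th symbolic power of the ideal of the points `P`. -/
noncomputable def symbPow {F : Type} [Field F] {N s : ℕ}
    (P : Fin s → Fin N → F) (m : ℕ) : Ideal (MvPolynomial (Fin N) F) :=
  ⨅ i, (pointIdeal (P i)) ^ m

/-- The Waldschmidt constant of the ideal of the points `P`. -/
noncomputable def waldschmidt {F : Type} [Field F] {N s : ℕ}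
    (P : Fin s → Fin N → F) : ℝ :=
  ⨅ m : ℕ+, (alphaIdeal (symbPow P (m : ℕ)) : ℝ) / (m : ℝ)

/-- `Q` holds for a *very general* configuration of `s` points with `N` homogeneous
coordinates: outside a countable union of proper closed subsets of the parameter space. -/
def VeryGeneralHolds (F : Type) [Field F] (N s : ℕ)
    (Q : (Fin s → Fin N → F) → Prop) : Prop :=
  ∃ H : ℕ → MvPolynomial (Fin s × Fin N) F,
    (∀ i, H i ≠ 0) ∧
    ∀ P : Fin s → Fin N → F,
      (∀ i, MvPolynomial.eval (fun q => P q.1 q.2) (H i) ≠ 0) → Q P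

/-- `Q` holds for a *general* configuration of `s` points with `N` homogeneous
coordinates: on a nonempty Zariski-open subset of the parameter space. -/
def GeneralHolds (F : Type) [Field F] (N s : ℕ)
    (Q : (Fin s → Fin N → F) → Prop) : Prop :=
  ∃ H : MvPolynomial (Fin s × Fin N) F, H ≠ 0 ∧
    ∀ P : Fin s → Fin N → F,
      MvPolynomial.eval (fun q => P q.1 q.2) H ≠ 0 → Q P


namespace NagataAux

variable {F : Type} [Field F] {N : ℕ}

theorem degree_add' (x y : Fin N →₀ ℕ) : (x + y).degree = x.degree + y.degree := by
  simp [Finsupp.degree_eq_weight_one, map_add]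

/-- Convolution formula for homogeneous components of a product. -/
theorem hc_mul (a b : MvPolynomial (Fin N) F) (d : ℕ) :
    homogeneousComponent d (a * b) =
      ∑ uv ∈ Finset.HasAntidiagonal.antidiagonal d,
        homogeneousComponent uv.1 a * homogeneousComponent uv.2 b := by
  classical
  ext γ
  rw [coeff_homogeneousComponent, coeff_sum]
  simp only [coeff_mul, coeff_homogeneousComponent]
  rw [Finset.sum_comm]
  by_cases h : γ.degree = d
  · rw [if_pos h]
    apply Finset.sum_congr rfl
    intro xy hxy
    rw [Finset.HasAntidiagonal.mem_antidiagonal] at hxy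
    rw [Finset.sum_eq_single (xy.1.degree, xy.2.degree)]
    · simp
    · intro uv _ hne
      by_cases h1 : xy.1.degree = uv.1
      · by_cases h2 : xy.2.degree = uv.2
        · exact absurd (Prod.ext h1.symm h2.symm : uv = _) hne
        · simp [h2]
      · simp [h1]
    · intro hnot
      exfalso
      apply hnot
      rw [Finset.HasAntidiagonal.mem_antidiagonal, ← degree_add', hxy, h]
  · rw [if_neg h]
    symm
    apply Finset.sum_eq_zero
    intro xy hxy
    rw [Finset.HasAntidiagonal.mem_antidiagonal] at hxy
    apply Finset.sum_eq_zero
    intro uv huv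
    rw [Finset.HasAntidiagonal.mem_antidiagonal] at huv
    by_cases h1 : xy.1.degree = uv.1
    · by_cases h2 : xy.2.degree = uv.2
      · exfalso; apply h
        rw [← hxy, degree_add', h1, h2, huv]
      · simp [h2]
    · simp [h1]


theorem eval_aeval {M : ℕ} (x : Fin M → F) (σf : Fin N → MvPolynomial (Fin M) F)
    (f : MvPolynomial (Fin N) F) :
    eval x (aeval σf f) = eval (fun i => eval x (σf i)) f := by
  induction f using MvPolynomial.induction_on with
  | C a => simp
  | add p q hp hq => rw [map_add, map_add, map_add, hp, hq]
  | mul_X p i hp => rw [map_mul, map_mul, aeval_X, hp, map_mul, eval_X]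

/-- The shift `f(X) ↦ f(X + p)`. -/
noncomputable def psh (p : Fin N → F) :
    MvPolynomial (Fin N) F →ₐ[F] MvPolynomial (Fin N) F :=
  aeval (fun i => X i + C (p i))

theorem comp_zero_psh (p : Fin N → F) (f : MvPolynomial (Fin N) F) :
    homogeneousComponent 0 (psh p f) = C (eval p f) := by
  rw [homogeneousComponent_zero]
  congr 1
  rw [← constantCoeff_eq, ← eval_zero]
  show eval 0 (aeval (fun i => X i + C (p i)) f) = _
  rw [eval_aeval]
  simp

theorem eq_zero_of_comps (f : MvPolynomial (Fin N) F)
    (h : ∀ d, homogeneousComponent d f = 0) : f = 0 := by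
  ext γ
  have := congrArg (coeff γ) (h γ.degree)
  rwa [coeff_homogeneousComponent, if_pos rfl, coeff_zero] at this

theorem isHomogeneous_of_comps (f : MvPolynomial (Fin N) F) (D : ℕ)
    (h : ∀ d, d ≠ D → homogeneousComponent d f = 0) : f.IsHomogeneous D := by
  intro γ hγ
  by_contra hne
  have h2 : γ.degree ≠ D := by
    rw [Finsupp.degree_eq_weight_one]; exact hne
  have := congrArg (coeff γ) (h _ h2)
  rw [coeff_homogeneousComponent, if_pos rfl, coeff_zero] at this
  exact hγ this

/-- Elements of the `m`-th power of an ideal of "positive-constant-term-free"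
polynomials have vanishing homogeneous components below `m`. -/
theorem comps_eq_zero_of_mem_pow (J : Ideal (MvPolynomial (Fin N) F))
    (hJ : ∀ g ∈ J, homogeneousComponent 0 g = 0) (m : ℕ) :
    ∀ f ∈ J ^ m, ∀ d < m, homogeneousComponent d f = 0 := by
  induction m with
  | zero => intro f _ d hd; omega
  | succ m ihm =>
    intro f hf d hd
    rw [pow_succ] at hf
    induction hf using Submodule.mul_induction_on' with
    | mem_mul_mem a ha b hb =>
      rw [hc_mul]
      apply Finset.sum_eq_zero
      intro uv huv
      rw [Finset.HasAntidiagonal.mem_antidiagonal] at huv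
      rcases lt_or_ge uv.1 m with h1 | h1
      · rw [ihm a ha uv.1 h1, zero_mul]
      · have : uv.2 = 0 := by omega
        rw [this, hJ b hb, mul_zero]
    | add x hx y hy ihx ihy => rw [map_add, ihx, ihy, add_zero]

/-- Key cancellation: if `A * B` has vanishing components `< m + 1`,
`A` has vanishing constant component, and nonzero linear component, then `B` has
vanishing components `< m`. -/
theorem descend (A B : MvPolynomial (Fin N) F) (m : ℕ)
    (hAB : ∀ d < m + 1, homogeneousComponent d (A * B) = 0)
    (hA0 : homogeneousComponent 0 A = 0)
    (hA1 : homogeneousComponent 1 A ≠ 0) :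
    ∀ d < m, homogeneousComponent d B = 0 := by
  intro d
  induction d using Nat.strong_induction_on with
  | _ d ihd =>
    intro hd
    have h1 : homogeneousComponent (d + 1) (A * B) = 0 := hAB _ (by omega)
    rw [hc_mul] at h1
    rw [Finset.sum_eq_single (1, d)] at h1
    · exact (mul_eq_zero.mp h1).resolve_left hA1
    · intro uv huv hne
      rw [Finset.HasAntidiagonal.mem_antidiagonal] at huv
      rcases Nat.eq_zero_or_pos uv.1 with h0 | h0
      · rw [h0] at huv ⊢; rw [hA0, zero_mul]
      · have : uv.2 < d := by
          rcases Nat.lt_or_ge uv.2 d with h | h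
          · exact h
          · exfalso; apply hne
            have : uv.1 = 1 ∧ uv.2 = d := by omega
            exact Prod.ext this.1 this.2
        rw [ihd uv.2 this (by omega), mul_zero]
    · intro hne
      exfalso; exact hne (by rw [Finset.HasAntidiagonal.mem_antidiagonal]; omega)

theorem degree_eq_sum_univ (α : Fin N →₀ ℕ) : α.degree = ∑ i, α i := by
  rw [Finsupp.degree]
  exact Finset.sum_subset (Finset.subset_univ _)
    (fun i _ h => Finsupp.notMem_support_iff.mp h)

theorem isHomogeneous_aeval {M : ℕ} (σf : Fin N → MvPolynomial (Fin M) F)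
    (hσ : ∀ i, (σf i).IsHomogeneous 1) (f : MvPolynomial (Fin N) F) (D : ℕ)
    (hf : f.IsHomogeneous D) : (aeval σf f).IsHomogeneous D := by
  have hrep : aeval σf f = ∑ α ∈ f.support, C (coeff α f) * ∏ i, (σf i) ^ (α i) := by
    conv_lhs => rw [f.as_sum]
    rw [map_sum]
    refine Finset.sum_congr rfl fun α hα => ?_
    rw [aeval_monomial, Finsupp.prod_fintype]
    · rfl
    · intro i; rfl
  rw [hrep]
  apply MvPolynomial.IsHomogeneous.sum
  intro α hα
  have hdeg : ∑ i, α i = D := by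
    rw [← degree_eq_sum_univ, Finsupp.degree_eq_weight_one]
    exact hf (MvPolynomial.mem_support_iff.mp hα)
  have h0 : (C (coeff α f) : MvPolynomial (Fin M) F).IsHomogeneous 0 :=
    isHomogeneous_C _ _
  have h1 : (∏ i, (σf i) ^ (α i)).IsHomogeneous D := by
    rw [← hdeg]
    exact MvPolynomial.IsHomogeneous.prod Finset.univ _ _ fun i _ => by simpa using (hσ i).pow (α i)
  simpa using h0.mul h1

theorem comp_mul_homogeneous (U g : MvPolynomial (Fin N) F) (a e : ℕ)
    (hU : U.IsHomogeneous a) :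
    homogeneousComponent (a + e) (U * g) = U * homogeneousComponent e g := by
  rw [hc_mul, Finset.sum_eq_single (a, e)]
  · rw [homogeneousComponent_of_mem ((mem_homogeneousSubmodule _ _).mpr hU), if_pos rfl]
  · intro uv huv hne
    rw [Finset.HasAntidiagonal.mem_antidiagonal] at huv
    rw [homogeneousComponent_of_mem ((mem_homogeneousSubmodule _ _).mpr hU)]
    by_cases h : uv.1 = a
    · exfalso; exact hne (Prod.ext h (by omega))
    · rw [if_neg h, zero_mul]
  · intro hne
    exact absurd (by rw [Finset.HasAntidiagonal.mem_antidiagonal] : (a, e) ∈ Finset.HasAntidiagonal.antidiagonal (a + e)) hne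

theorem mul_homog_cancel (U g : MvPolynomial (Fin N) F) (a D : ℕ)
    (hU : U.IsHomogeneous a) (hU0 : U ≠ 0)
    (hUg : (U * g).IsHomogeneous (a + D)) : g.IsHomogeneous D := by
  apply isHomogeneous_of_comps
  intro e he
  have h1 : homogeneousComponent (a + e) (U * g) = 0 := by
    rw [homogeneousComponent_of_mem ((mem_homogeneousSubmodule _ _).mpr hUg),
      if_neg (show a + e ≠ a + D by omega)]
  rw [comp_mul_homogeneous U g a e hU] at h1
  exact (mul_eq_zero.mp h1).resolve_left hU0

theorem mul_homog_lt (U g : MvPolynomial (Fin N) F) (a D : ℕ)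
    (hU : U.IsHomogeneous a) (hU0 : U ≠ 0) (hg : g ≠ 0)
    (hUg : (U * g).IsHomogeneous D) (hD : D < a) : False := by
  have : ∃ e, homogeneousComponent e g ≠ 0 := by
    by_contra h
    push_neg at h
    exact hg (eq_zero_of_comps g h)
  obtain ⟨e, he⟩ := this
  have h1 : homogeneousComponent (a + e) (U * g) = 0 := by
    rw [homogeneousComponent_of_mem ((mem_homogeneousSubmodule _ _).mpr hUg),
      if_neg (show a + e ≠ D by omega)]
  rw [comp_mul_homogeneous U g a e hU] at h1
  exact he ((mul_eq_zero.mp h1).resolve_left hU0)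

theorem pointIdeal_le_ker (p : Fin N → F) :
    pointIdeal p ≤ RingHom.ker (eval p) := by
  rw [pointIdeal, Ideal.span_le]
  intro g hg
  exact hg.2

theorem mult_of_mem_pow (p : Fin N → F) (m : ℕ) (f : MvPolynomial (Fin N) F)
    (hf : f ∈ (pointIdeal p) ^ m) :
    ∀ d < m, homogeneousComponent d (psh p f) = 0 := by
  set K : Ideal (MvPolynomial (Fin N) F) := RingHom.ker (eval (0 : Fin N → F)) with hKdef
  have hK : ∀ g ∈ K, homogeneousComponent 0 g = 0 := by
    intro g hg
    rw [homogeneousComponent_zero, ← constantCoeff_eq, ← eval_zero]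
    rw [RingHom.mem_ker] at hg
    rw [hg, map_zero]
  apply comps_eq_zero_of_mem_pow K hK m
  have hmap : Ideal.map (psh p) (pointIdeal p) ≤ K := by
    rw [pointIdeal, Ideal.map_span, Ideal.span_le]
    rintro - ⟨g, hg, rfl⟩
    rw [SetLike.mem_coe, RingHom.mem_ker]
    show eval 0 (aeval (fun i => X i + C (p i)) g) = 0
    rw [eval_aeval]
    simpa using hg.2
  have := Ideal.mem_map_of_mem (psh p) hf
  rw [Ideal.map_pow] at this
  exact Ideal.pow_right_mono hmap _ this

theorem mem_pow_pointIdeal_aeval {M : ℕ} (σf : Fin N → MvPolynomial (Fin M) F)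
    (hσ : ∀ i, (σf i).IsHomogeneous 1) (x : Fin M → F) (p : Fin N → F)
    (hpt : ∀ i, eval x (σf i) = p i) (m : ℕ) (f : MvPolynomial (Fin N) F)
    (hf : f ∈ (pointIdeal p) ^ m) :
    aeval σf f ∈ (pointIdeal x) ^ m := by
  have hmap : Ideal.map (aeval σf) (pointIdeal p) ≤ pointIdeal x := by
    rw [pointIdeal, Ideal.map_span, Ideal.span_le]
    rintro - ⟨g, hg, rfl⟩
    obtain ⟨⟨d, hgd⟩, hg0⟩ := hg
    apply Ideal.subset_span
    refine ⟨⟨d, isHomogeneous_aeval σf hσ g d hgd⟩, ?_⟩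
    rw [eval_aeval]
    have : (fun i => eval x (σf i)) = p := funext hpt
    rw [this, hg0]
  have := Ideal.mem_map_of_mem (aeval σf) hf
  rw [Ideal.map_pow] at this
  exact Ideal.pow_right_mono hmap _ this

theorem degree_erase_add (w : Fin N) (β : Fin N →₀ ℕ) :
    (β.erase w).degree + β w = β.degree := by
  rw [degree_eq_sum_univ, degree_eq_sum_univ]
  have h1 : ∑ i, (β.erase w) i = ∑ i ∈ Finset.univ.erase w, β i := by
    rw [← Finset.add_sum_erase _ _ (Finset.mem_univ w), Finsupp.erase_same, zero_add]
    exact Finset.sum_congr rfl fun i hi => Finsupp.erase_ne (Finset.ne_of_mem_erase hi)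
  rw [h1, add_comm, Finset.add_sum_erase _ _ (Finset.mem_univ w)]

theorem monomial_one_eq_prod (β : Fin N →₀ ℕ) :
    (monomial β 1 : MvPolynomial (Fin N) F) = ∏ i, X i ^ β i := by
  rw [monomial_eq, map_one, one_mul, Finsupp.prod_fintype]
  intro i; rfl

theorem monomial_eq_prod' (β : Fin N →₀ ℕ) (a : F) (w : Fin N) :
    (monomial β a : MvPolynomial (Fin N) F) =
      C a * X w ^ β w * ∏ i ∈ Finset.univ.erase w, X i ^ β i := by
  have : (monomial β a : MvPolynomial (Fin N) F) = C a * monomial β 1 := by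
    rw [C_mul_monomial, mul_one]
  rw [this, monomial_one_eq_prod, ← Finset.mul_prod_erase _ _ (Finset.mem_univ w), mul_assoc]

theorem psh_single_monomial (w : Fin N) (c : F) (α : Fin N →₀ ℕ) (a : F) :
    psh (fun i => if i = w then c else 0) (monomial α a) =
      C a * (X w + C c) ^ α w * ∏ i ∈ Finset.univ.erase w, X i ^ α i := by
  show aeval _ _ = _
  rw [aeval_monomial, Finsupp.prod_fintype _ _ (fun i => pow_zero _)]
  rw [← Finset.mul_prod_erase _ _ (Finset.mem_univ w)]
  beta_reduce
  rw [if_pos rfl]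
  have hrest : ∀ i ∈ Finset.univ.erase w,
      (X i + C (if i = w then c else 0)) ^ α i = (X i : MvPolynomial (Fin N) F) ^ α i := by
    intro i hi
    rw [if_neg (Finset.ne_of_mem_erase hi), map_zero, add_zero]
  rw [Finset.prod_congr rfl hrest, algebraMap_eq, ← mul_assoc]

theorem coeff_psh_single_monomial (w : Fin N) (c : F) (α γ : Fin N →₀ ℕ) (a : F)
    (hγ : γ w = 0) :
    coeff γ (psh (fun i => if i = w then c else 0) (monomial α a)) =
      if α.erase w = γ then a * c ^ α w else 0 := by
  rw [psh_single_monomial]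
  have hexp : (X w + C c : MvPolynomial (Fin N) F) ^ α w =
      ∑ j ∈ Finset.range (α w + 1),
        X w ^ j * C (c ^ (α w - j)) * ((α w).choose j : MvPolynomial (Fin N) F) := by
    rw [add_pow]
    refine Finset.sum_congr rfl fun j hj => ?_
    rw [← C_pow]
  rw [hexp, Finset.mul_sum, Finset.sum_mul, coeff_sum]
  have hterm : ∀ j : ℕ, C a * (X w ^ j * C (c ^ (α w - j)) * ((α w).choose j : MvPolynomial (Fin N) F))
        * ∏ i ∈ Finset.univ.erase w, X i ^ α i =
      monomial (α.erase w + Finsupp.single w j) (a * c ^ (α w - j) * (α w).choose j) := by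
    intro j
    have hmon : (monomial (α.erase w + Finsupp.single w j) (1 : F)) =
        X w ^ j * ∏ i ∈ Finset.univ.erase w, X i ^ α i := by
      rw [monomial_one_eq_prod, ← Finset.mul_prod_erase _ _ (Finset.mem_univ w)]
      congr 1
      · rw [Finsupp.add_apply, Finsupp.erase_same, Finsupp.single_apply, if_pos rfl, zero_add]
      · refine Finset.prod_congr rfl fun i hi => ?_
        have hne := Finset.ne_of_mem_erase hi
        rw [Finsupp.add_apply, Finsupp.erase_ne hne, Finsupp.single_apply,
          if_neg (Ne.symm hne), add_zero]
    calc C a * (X w ^ j * C (c ^ (α w - j)) * ((α w).choose j : MvPolynomial (Fin N) F))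
          * ∏ i ∈ Finset.univ.erase w, X i ^ α i
        = C (a * c ^ (α w - j) * (α w).choose j) *
            (X w ^ j * ∏ i ∈ Finset.univ.erase w, X i ^ α i) := by
          rw [← map_natCast (C : F →+* MvPolynomial (Fin N) F) ((α w).choose j)]
          simp only [map_mul]
          ring
      _ = C (a * c ^ (α w - j) * (α w).choose j) * monomial (α.erase w + Finsupp.single w j) 1 := by
          rw [hmon]
      _ = monomial (α.erase w + Finsupp.single w j) (a * c ^ (α w - j) * (α w).choose j) := by
          rw [C_mul_monomial, mul_one]
  simp only [hterm, coeff_monomial]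
  rw [Finset.sum_eq_single 0]
  · by_cases h : α.erase w = γ
    · rw [if_pos (by rw [Finsupp.single_zero, add_zero, h]), if_pos h]
      simp
    · rw [if_neg (by rw [Finsupp.single_zero, add_zero]; exact h), if_neg h]
  · intro j _ hj
    rw [if_neg]
    intro heq
    apply hj
    have := congrFun (congrArg (fun (x : Fin N →₀ ℕ) => (x : Fin N → ℕ)) heq) w
    simpa [Finsupp.erase_same, hγ] using this
  · intro h0
    exact absurd (Finset.mem_range.mpr (by omega)) h0

theorem psh_X (p : Fin N → F) (i : Fin N) : psh p (X i) = X i + C (p i) :=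
  aeval_X _ _

theorem psh_C (p : Fin N → F) (r : F) : psh p (C r) = C r := by
  rw [psh, aeval_C, algebraMap_eq]

theorem degree_erase_eq_sum (w : Fin N) (β : Fin N →₀ ℕ) :
    (β.erase w).degree = ∑ i ∈ Finset.univ.erase w, β i := by
  rw [degree_eq_sum_univ, ← Finset.add_sum_erase _ _ (Finset.mem_univ w),
    Finsupp.erase_same, zero_add]
  exact Finset.sum_congr rfl fun i hi => Finsupp.erase_ne (Finset.ne_of_mem_erase hi)

theorem prod_pow_mem_pow (K : Ideal (MvPolynomial (Fin N) F))
    (x : Fin N → MvPolynomial (Fin N) F) (s : Finset (Fin N)) (e : Fin N → ℕ)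
    (hx : ∀ b ∈ s, x b ∈ K) :
    (∏ b ∈ s, x b ^ e b) ∈ K ^ (∑ b ∈ s, e b) := by
  classical
  induction s using Finset.induction_on with
  | empty => simp [Ideal.one_eq_top]
  | @insert b s hb ih =>
    rw [Finset.prod_insert hb, Finset.sum_insert hb, pow_add]
    exact Ideal.mul_mem_mul (Ideal.pow_mem_pow (hx _ (Finset.mem_insert_self _ _)) _)
      (ih fun b' hb' => hx b' (Finset.mem_insert_of_mem hb'))

/-- Core lemma: a homogeneous polynomial vanishing to order `m` at a scaled
coordinate point has all its monomials of "off-`w`" degree at least `m`. -/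
theorem offdeg_ge_of_mult (w : Fin N) (c : F) (hc : c ≠ 0)
    (g : MvPolynomial (Fin N) F) (D m : ℕ) (hg : g.IsHomogeneous D)
    (hmult : ∀ d < m,
      homogeneousComponent d (psh (fun i => if i = w then c else 0) g) = 0)
    (α : Fin N →₀ ℕ) (hα : α ∈ g.support) : m ≤ (α.erase w).degree := by
  by_contra hlt
  push_neg at hlt
  have hγw : (α.erase w) w = 0 := Finsupp.erase_same
  have hcoeff : coeff (α.erase w) (psh (fun i => if i = w then c else 0) g)
      = coeff α g * c ^ α w := by
    conv_lhs => rw [g.as_sum, map_sum]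
    rw [coeff_sum]
    rw [Finset.sum_eq_single α]
    · rw [coeff_psh_single_monomial _ _ _ _ _ hγw, if_pos rfl]
    · intro β hβ hne
      rw [coeff_psh_single_monomial _ _ _ _ _ hγw, if_neg]
      intro heq
      apply hne
      have hdβ : β.degree = D := by
        rw [Finsupp.degree_eq_weight_one]; exact hg (mem_support_iff.mp hβ)
      have hdα : α.degree = D := by
        rw [Finsupp.degree_eq_weight_one]; exact hg (mem_support_iff.mp hα)
      have h1 := degree_erase_add w β
      have h2 := degree_erase_add w α
      rw [heq] at h1
      have hwba : β w = α w := by omega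
      have : Finsupp.single w (β w) + β.erase w
          = Finsupp.single w (α w) + α.erase w := by
        rw [heq, hwba]
      rwa [Finsupp.single_add_erase, Finsupp.single_add_erase] at this
    · intro h; exact absurd hα h
  have h0 := hmult (α.erase w).degree hlt
  have := congrArg (coeff (α.erase w)) h0
  rw [coeff_homogeneousComponent, if_pos rfl, coeff_zero, hcoeff] at this
  exact absurd this (mul_ne_zero (mem_support_iff.mp hα) (pow_ne_zero _ hc))

theorem comp_aeval_linear {M : ℕ} (σf : Fin N → MvPolynomial (Fin M) F)
    (hσ : ∀ i, (σf i).IsHomogeneous 1) (h : MvPolynomial (Fin N) F) (d : ℕ) :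
    homogeneousComponent d (aeval σf h) = aeval σf (homogeneousComponent d h) := by
  have hmem : ∀ e : ℕ, aeval σf (homogeneousComponent e h)
      ∈ homogeneousSubmodule (Fin M) F e := fun e =>
    (mem_homogeneousSubmodule _ _).mpr
      (isHomogeneous_aeval σf hσ _ _ (homogeneousComponent_isHomogeneous e h))
  conv_lhs => rw [← sum_homogeneousComponent h, map_sum, map_sum]
  rw [Finset.sum_eq_single d]
  · rw [homogeneousComponent_of_mem (hmem d), if_pos rfl]
  · intro e _ hne
    rw [homogeneousComponent_of_mem (hmem e), if_neg (Ne.symm hne)]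
  · intro hd
    rw [Finset.mem_range, not_lt] at hd
    rw [homogeneousComponent_eq_zero d h (by omega), map_zero, map_zero]

/-- The hard direction: a homogeneous polynomial vanishing to order `m` at a
nonzero point `p` lies in the `m`-th power of the point ideal. -/
theorem mem_pow_of_mult (p : Fin N → F) (hp : p ≠ 0)
    (f : MvPolynomial (Fin N) F) (D m : ℕ) (hf : f.IsHomogeneous D)
    (hmult : ∀ d < m, homogeneousComponent d (psh p f) = 0) :
    f ∈ (pointIdeal p) ^ m := by
  classical
  have hex : ∃ w, p w ≠ 0 := by
    by_contra h
    push_neg at h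
    exact hp (funext h)
  obtain ⟨w, hw⟩ := hex
  set ρ : Fin N → MvPolynomial (Fin N) F :=
    fun i => if i = w then X w else X i + C (p i / p w) * X w with hρdef
  set ρi : Fin N → MvPolynomial (Fin N) F :=
    fun i => if i = w then X w else X i - C (p i / p w) * X w with hρidef
  have hρw : ρ w = X w := by rw [hρdef]; simp
  have hρiw : ρi w = X w := by rw [hρidef]; simp
  have hρne : ∀ i, i ≠ w → ρ i = X i + C (p i / p w) * X w := by
    intro i hi; rw [hρdef]; simp [hi]
  have hρine : ∀ i, i ≠ w → ρi i = X i - C (p i / p w) * X w := by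
    intro i hi; rw [hρidef]; simp [hi]
  have hρ1 : ∀ i, (ρ i).IsHomogeneous 1 := by
    intro i
    by_cases h : i = w
    · rw [h, hρw]; exact isHomogeneous_X _ _
    · rw [hρne i h]
      exact (isHomogeneous_X _ _).add
        (by simpa using (isHomogeneous_C _ (p i / p w)).mul (isHomogeneous_X _ w))
  have hρi1 : ∀ i, (ρi i).IsHomogeneous 1 := by
    intro i
    by_cases h : i = w
    · rw [h, hρiw]; exact isHomogeneous_X _ _
    · rw [hρine i h]
      exact (isHomogeneous_X _ _).sub
        (by simpa using (isHomogeneous_C _ (p i / p w)).mul (isHomogeneous_X _ w))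
  have hcomp : ∀ h : MvPolynomial (Fin N) F, aeval ρi (aeval ρ h) = h := by
    intro h
    have hext : (aeval ρi).comp (aeval ρ) = AlgHom.id F (MvPolynomial (Fin N) F) := by
      apply MvPolynomial.algHom_ext
      intro i
      simp only [AlgHom.comp_apply, aeval_X, AlgHom.id_apply]
      by_cases hiw : i = w
      · rw [hiw, hρw, aeval_X, hρiw]
      · rw [hρne i hiw, map_add, map_mul, aeval_X, aeval_X, aeval_C, hρine i hiw,
          hρiw, algebraMap_eq]
        ring
    exact congrArg (fun φ => φ h) hext
  have hshift : ∀ h, psh (fun i => if i = w then p w else 0) (aeval ρ h)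
      = aeval ρ (psh p h) := by
    intro h
    have hext : (psh (fun i => if i = w then p w else 0)).comp (aeval ρ)
        = (aeval ρ).comp (psh p) := by
      apply MvPolynomial.algHom_ext
      intro i
      simp only [AlgHom.comp_apply, aeval_X]
      show psh _ (ρ i) = aeval ρ (psh p (X i))
      rw [psh_X, map_add, aeval_X, aeval_C, algebraMap_eq]
      by_cases hiw : i = w
      · rw [hiw, hρw, psh_X]
        beta_reduce
        rw [if_pos rfl]
      · rw [hρne i hiw, map_add, map_mul, psh_X, psh_X, psh_C]
        beta_reduce
        rw [if_neg hiw, if_pos rfl]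
        have hcc : C (p i / p w) * (X w + C (p w))
            = C (p i / p w) * X w + C (p i) := by
          rw [mul_add, ← C_mul, div_mul_cancel₀ _ hw]
        rw [hcc, map_zero]
        ring
    exact congrArg (fun φ => φ h) hext
  have hg : (aeval ρ f).IsHomogeneous D := isHomogeneous_aeval ρ hρ1 f D hf
  have hmultg : ∀ d < m,
      homogeneousComponent d (psh (fun i => if i = w then p w else 0) (aeval ρ f)) = 0 := by
    intro d hd
    rw [hshift, comp_aeval_linear ρ hρ1, hmult d hd, map_zero]
  set K : Ideal (MvPolynomial (Fin N) F) := Ideal.span {h | ∃ b, b ≠ w ∧ h = X b}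
    with hKdef
  have hgK : aeval ρ f ∈ K ^ m := by
    rw [(aeval ρ f).as_sum]
    apply Submodule.sum_mem
    intro α hα
    have hoff : m ≤ (α.erase w).degree :=
      offdeg_ge_of_mult w (p w) hw (aeval ρ f) D m hg hmultg α hα
    rw [monomial_eq_prod' _ _ w]
    apply Ideal.mul_mem_left
    have hP : (∏ i ∈ Finset.univ.erase w, X i ^ α i) ∈ K ^ ((α.erase w).degree) := by
      rw [degree_erase_eq_sum]
      exact prod_pow_mem_pow K X _ _
        (fun b hb => Ideal.subset_span ⟨b, Finset.ne_of_mem_erase hb, rfl⟩)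
    exact Ideal.pow_le_pow_right hoff hP
  have hmap : Ideal.map (aeval ρi) K ≤ pointIdeal p := by
    rw [hKdef, Ideal.map_span, Ideal.span_le]
    rintro - ⟨h, ⟨b, hbw, rfl⟩, rfl⟩
    apply Ideal.subset_span
    constructor
    · exact ⟨1, by rw [aeval_X]; exact hρi1 b⟩
    · rw [aeval_X, hρine b hbw, map_sub, map_mul, eval_X, eval_X, eval_C,
        div_mul_cancel₀ _ hw, sub_self]
  have hmem : aeval ρi (aeval ρ f) ∈ (Ideal.map (aeval ρi) K) ^ m := by
    rw [← Ideal.map_pow]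
    exact Ideal.mem_map_of_mem _ hgK
  rw [hcomp f] at hmem
  exact Ideal.pow_right_mono hmap m hmem

theorem prod_dvd_of_roots {R : Type*} [CommRing R] [IsDomain R] {ι : Type*}
    [DecidableEq ι] (s : Finset ι) (a : ι → R) (p : Polynomial R)
    (hd : ∀ i ∈ s, ∀ j ∈ s, i ≠ j → a i ≠ a j)
    (hr : ∀ i ∈ s, Polynomial.eval (a i) p = 0) :
    (∏ i ∈ s, (Polynomial.X - Polynomial.C (a i))) ∣ p := by
  induction s using Finset.induction_on generalizing p with
  | empty => simp
  | @insert i s hi ih =>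
    obtain ⟨g, rfl⟩ : (Polynomial.X - Polynomial.C (a i)) ∣ p :=
      Polynomial.dvd_iff_isRoot.mpr (hr i (Finset.mem_insert_self _ _))
    rw [Finset.prod_insert hi]
    apply mul_dvd_mul_left
    apply ih
    · intro x hx y hy hxy
      exact hd x (Finset.mem_insert_of_mem hx) y (Finset.mem_insert_of_mem hy) hxy
    · intro j hj
      have hroot := hr j (Finset.mem_insert_of_mem hj)
      rw [Polynomial.eval_mul, Polynomial.eval_sub, Polynomial.eval_X,
        Polynomial.eval_C] at hroot
      have hne : a j - a i ≠ 0 := sub_ne_zero.mpr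
        (hd j (Finset.mem_insert_of_mem hj) i (Finset.mem_insert_self _ _)
          (fun h => hi (h ▸ hj)))
      exact (mul_eq_zero.mp hroot).resolve_left hne

section Divide

variable {n : ℕ}

/-- The substitution giving the restriction to the hyperplane `x₀ = c · x_pv`. -/
noncomputable def hsub (pv : Fin n) (c : F) : Fin (n + 1) → MvPolynomial (Fin n) F :=
  Fin.cases (C c * X pv) (fun i => X i)

/-- The linear form of the hyperplane. -/
noncomputable def hline (pv : Fin n) (c : F) : MvPolynomial (Fin (n + 1)) F :=
  X 0 - C c * X pv.succ

theorem aeval_hsub_eq (pv : Fin n) (c : F) (f : MvPolynomial (Fin (n + 1)) F) :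
    aeval (hsub pv c) f
      = Polynomial.eval (C c * X pv) (finSuccEquiv F n f) := by
  have hhom : ((Polynomial.evalRingHom (C c * X pv)).comp
        ((finSuccEquiv F n) : MvPolynomial (Fin (n + 1)) F →+* Polynomial (MvPolynomial (Fin n) F)))
      = ((aeval (hsub pv c)) : MvPolynomial (Fin (n + 1)) F →ₐ[F] MvPolynomial (Fin n) F).toRingHom := by
    apply MvPolynomial.ringHom_ext
    · intro r
      simp [finSuccEquiv_apply, hsub, algebraMap_eq]
    · intro i
      induction i using Fin.cases with
      | zero => simp [finSuccEquiv_X_zero, hsub]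
      | succ j => simp [finSuccEquiv_X_succ, hsub]
  exact (congrArg (fun (φ : MvPolynomial (Fin (n + 1)) F →+* MvPolynomial (Fin n) F)
    => φ f) hhom).symm

theorem exists_factor_of_aeval_zero {k : ℕ} (pv : Fin n) (c : Fin k → F)
    (hc : Function.Injective c) (f : MvPolynomial (Fin (n + 1)) F)
    (hz : ∀ j, aeval (hsub pv (c j)) f = 0) :
    ∃ g, f = (∏ j, hline pv (c j)) * g := by
  classical
  set E := finSuccEquiv F n
  have hroots : ∀ j : Fin k, Polynomial.eval (C (c j) * X pv) (E f) = 0 := by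
    intro j
    rw [← aeval_hsub_eq]
    exact hz j
  have hdist : ∀ i ∈ Finset.univ, ∀ j ∈ Finset.univ, i ≠ j →
      (C (c i) * X pv : MvPolynomial (Fin n) F) ≠ C (c j) * X pv := by
    intro i _ j _ hij heq
    have : (C (c i - c j) : MvPolynomial (Fin n) F) * X pv = 0 := by
      rw [map_sub, sub_mul, heq, sub_self]
    rcases mul_eq_zero.mp this with h | h
    · apply hij
      apply hc
      apply sub_eq_zero.mp
      have h2 := congrArg (coeff 0) h
      rwa [coeff_C, if_pos rfl, coeff_zero] at h2
    · exact MvPolynomial.X_ne_zero _ h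
  obtain ⟨G, hG⟩ := prod_dvd_of_roots Finset.univ (fun j => C (c j) * X pv) (E f)
    hdist (fun j _ => hroots j)
  refine ⟨E.symm G, ?_⟩
  apply E.injective
  rw [map_mul, hG]
  congr 1
  · rw [map_prod]
    symm
    refine Finset.prod_congr rfl fun j _ => ?_
    show E (hline pv (c j)) = _
    rw [hline, map_sub, map_mul]
    show E (X 0) - E (C (c j)) * E (X pv.succ) = _
    rw [finSuccEquiv_X_zero, finSuccEquiv_X_succ]
    have hC : E (C (c j)) = Polynomial.C (C (c j)) := by
      simp [E, finSuccEquiv_apply]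
    rw [hC, ← Polynomial.C_mul]
  · exact (E.apply_symm_apply G).symm

end Divide
section Special

variable {n k s : ℕ}

theorem hline_isHomogeneous (pv : Fin n) (cj : F) :
    (hline pv cj).IsHomogeneous 1 :=
  (isHomogeneous_X _ _).sub
    (by simpa using (isHomogeneous_C _ cj).mul (isHomogeneous_X _ pv.succ))

theorem hline_ne_zero (pv : Fin n) (cj : F) : hline pv cj ≠ 0 := by
  intro h
  have := congrArg (coeff (Finsupp.single 0 1)) h
  rw [hline, coeff_sub, coeff_zero, coeff_C_mul] at this
  rw [coeff_X', coeff_X', if_pos rfl, if_neg] at this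
  · simp at this
  · intro heq
    have h0 := DFunLike.congr_fun heq 0
    rw [Finsupp.single_eq_of_ne' (Fin.succ_ne_zero pv), Finsupp.single_eq_same] at h0
    exact one_ne_zero h0.symm

theorem hsub_isHomogeneous (pv : Fin n) (cj : F) :
    ∀ i, ((hsub pv cj) i).IsHomogeneous 1 := by
  intro i
  induction i using Fin.cases with
  | zero =>
    rw [hsub, Fin.cases_zero]
    simpa using (isHomogeneous_C _ cj).mul (isHomogeneous_X _ pv)
  | succ j =>
    rw [hsub, Fin.cases_succ]
    exact isHomogeneous_X _ _

/-- Step 2: vanishing statement for the special configuration of points on `k`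
hyperplanes. -/
theorem special_config (hk : 1 ≤ k) (m : ℕ) (pv : Fin n)
    (R : Fin s → Fin n → F) (hRpv : ∀ r, R r pv ≠ 0)
    (c : Fin k → F) (hc : Function.Injective c)
    (hihR : ∀ m', 1 ≤ m' → m' ≤ m →
      ∀ h : MvPolynomial (Fin n) F, h.IsHomogeneous (k * m' - 1) →
        (∀ r, h ∈ (pointIdeal (R r)) ^ m') → h = 0) :
    ∀ m', 1 ≤ m' → m' ≤ m →
      ∀ f : MvPolynomial (Fin (n + 1)) F, f.IsHomogeneous (k * m' - 1) →
        (∀ (j : Fin k) (r : Fin s),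
          f ∈ (pointIdeal (Fin.cons (c j * R r pv) (R r) : Fin (n+1) → F)) ^ m') →
        f = 0 := by
  intro m' hm'
  induction m', hm' using Nat.le_induction with
  | base =>
    intro hle f hf hmem
    -- restriction to each hyperplane vanishes
    have hfj0 : ∀ j, aeval (hsub pv (c j)) f = 0 := by
      intro j
      apply hihR 1 le_rfl hle
      · exact isHomogeneous_aeval _ (hsub_isHomogeneous pv (c j)) f _ hf
      · intro r
        apply mem_pow_pointIdeal_aeval _ (hsub_isHomogeneous pv (c j)) (R r) _ _ _ f
          (hmem j r)
        intro i
        induction i using Fin.cases with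
        | zero => rw [hsub, Fin.cases_zero, map_mul, eval_C, eval_X, Fin.cons_zero]
        | succ i => rw [hsub, Fin.cases_succ, eval_X, Fin.cons_succ]
    obtain ⟨g, hgf⟩ := exists_factor_of_aeval_zero pv c hc f hfj0
    by_contra hf0
    have hgne : g ≠ 0 := fun hg0 => hf0 (by rw [hgf, hg0, mul_zero])
    have hU : (∏ j, hline pv (c j)).IsHomogeneous k := by
      have := MvPolynomial.IsHomogeneous.prod Finset.univ (fun j => hline pv (c j))
        (fun _ => 1) (fun j _ => hline_isHomogeneous pv (c j))
      simpa using this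
    have hUne : (∏ j, hline pv (c j)) ≠ 0 :=
      Finset.prod_ne_zero_iff.mpr fun j _ => hline_ne_zero pv (c j)
    rw [hgf] at hf
    exact mul_homog_lt _ g k (k * 1 - 1) hU hUne hgne hf (by omega)
  | succ m' hm' ihm =>
    intro hle f hf hmem
    have hfj0 : ∀ j, aeval (hsub pv (c j)) f = 0 := by
      intro j
      apply hihR (m' + 1) (by omega) hle
      · exact isHomogeneous_aeval _ (hsub_isHomogeneous pv (c j)) f _ hf
      · intro r
        apply mem_pow_pointIdeal_aeval _ (hsub_isHomogeneous pv (c j)) (R r) _ _ _ f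
          (hmem j r)
        intro i
        induction i using Fin.cases with
        | zero => rw [hsub, Fin.cases_zero, map_mul, eval_C, eval_X, Fin.cons_zero]
        | succ i => rw [hsub, Fin.cases_succ, eval_X, Fin.cons_succ]
    obtain ⟨g, hgf⟩ := exists_factor_of_aeval_zero pv c hc f hfj0
    have hU : (∏ j, hline pv (c j)).IsHomogeneous k := by
      have := MvPolynomial.IsHomogeneous.prod Finset.univ (fun j => hline pv (c j))
        (fun _ => 1) (fun j _ => hline_isHomogeneous pv (c j))
      simpa using this
    have hUne : (∏ j, hline pv (c j)) ≠ 0 :=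
      Finset.prod_ne_zero_iff.mpr fun j _ => hline_ne_zero pv (c j)
    have hkm' : 1 ≤ k * m' := Nat.one_le_iff_ne_zero.mpr
      (by positivity)
    have harith : k * (m' + 1) - 1 = k + (k * m' - 1) := by
      have : k * (m' + 1) = k * m' + k := by ring
      omega
    have hgdeg : g.IsHomogeneous (k * m' - 1) := by
      apply mul_homog_cancel (∏ j, hline pv (c j)) g k (k * m' - 1) hU hUne
      rw [← hgf, ← harith]
      exact hf
    have hgmem : ∀ (j : Fin k) (r : Fin s),
        g ∈ (pointIdeal (Fin.cons (c j * R r pv) (R r) : Fin (n+1) → F)) ^ m' := by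
      intro j r
      set q : Fin (n + 1) → F := (Fin.cons (c j * R r pv) (R r) : Fin (n+1) → F)
        with hqdef
      have hq0 : q 0 = c j * R r pv := Fin.cons_zero _ _
      have hqsucc : ∀ i, q i.succ = R r i := fun i => Fin.cons_succ _ _ _
      have hqne : q ≠ 0 := by
        intro h0
        apply hRpv r
        have := congrFun h0 pv.succ
        rwa [hqsucc pv] at this
      -- split off the hyperplane through this point
      have hsplit : (∏ j', hline pv (c j'))
          = hline pv (c j) * ∏ j' ∈ Finset.univ.erase j, hline pv (c j') :=
        (Finset.mul_prod_erase _ _ (Finset.mem_univ j)).symm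
      have hevalu : eval q (∏ j' ∈ Finset.univ.erase j, hline pv (c j')) ≠ 0 := by
        rw [map_prod]
        apply Finset.prod_ne_zero_iff.mpr
        intro j' hj'
        rw [hline, map_sub, map_mul, eval_C, eval_X, eval_X, hq0, hqsucc]
        intro hzero
        have h2 : (c j - c j') * R r pv = 0 := by
          rw [sub_mul]; linear_combination hzero
        rcases mul_eq_zero.mp h2 with h | h
        · exact (Finset.ne_of_mem_erase hj') (hc (sub_eq_zero.mp h)).symm
        · exact hRpv r h
      have hevall : eval q (hline pv (c j)) = 0 := by
        rw [hline, map_sub, map_mul, eval_C, eval_X, eval_X, hq0, hqsucc, sub_self]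
      have hpshl : psh q (hline pv (c j)) = hline pv (c j) := by
        rw [hline, map_sub, map_mul, psh_X, psh_X, psh_C]
        have h0 : q 0 = c j * q pv.succ := by rw [hq0, hqsucc]
        rw [h0, C_mul]
        ring
      have hA0 : homogeneousComponent 0
          (psh q (hline pv (c j) * ∏ j' ∈ Finset.univ.erase j, hline pv (c j'))) = 0 := by
        rw [comp_zero_psh, map_mul, hevall, zero_mul, map_zero]
      have hA1 : homogeneousComponent 1
          (psh q (hline pv (c j) * ∏ j' ∈ Finset.univ.erase j, hline pv (c j'))) ≠ 0 := by
        rw [map_mul, hpshl]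
        have hcm : homogeneousComponent 1
              (hline pv (c j) * psh q (∏ j' ∈ Finset.univ.erase j, hline pv (c j')))
            = hline pv (c j) * homogeneousComponent 0
              (psh q (∏ j' ∈ Finset.univ.erase j, hline pv (c j'))) :=
          comp_mul_homogeneous (hline pv (c j))
            (psh q (∏ j' ∈ Finset.univ.erase j, hline pv (c j'))) 1 0
            (hline_isHomogeneous pv (c j))
        rw [hcm, comp_zero_psh]
        apply mul_ne_zero (hline_ne_zero pv (c j))
        intro hC
        apply hevalu
        have := congrArg (coeff 0) hC
        rwa [coeff_C, if_pos rfl, coeff_zero] at this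
      have hcomps : ∀ d < m', homogeneousComponent d (psh q g) = 0 := by
        apply descend _ _ m' _ hA0 hA1
        intro d hd
        have hfULg : f = (hline pv (c j) * ∏ j' ∈ Finset.univ.erase j, hline pv (c j')) * g := by
          rw [hgf, hsplit]
        have := mult_of_mem_pow q (m' + 1) f (hmem j r) d hd
        rwa [hfULg, map_mul] at this
      exact mem_pow_of_mult q hqne g (k * m' - 1) m' hgdeg hcomps
    have hg0 : g = 0 := ihm (by omega) g hgdeg hgmem
    rw [hgf, hg0, mul_zero]

end Special
section LinAlg

/-- From joint injectivity of the rows, extract a square submatrix with nonzero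
determinant. -/
theorem exists_good_submatrix {ι κ : Type} [Fintype ι] [Fintype κ] [DecidableEq ι]
    [DecidableEq κ] (M : Matrix ι κ F)
    (hinj : ∀ v : κ → F, M.mulVec v = 0 → v = 0) :
    ∃ ir : κ → ι, (M.submatrix ir id).det ≠ 0 := by
  classical
  set rows : Set (κ → F) := Set.range (fun i => M i) with hrows
  have hspan : Submodule.span F rows = ⊤ := by
    by_contra hne
    obtain ⟨φ, hφne, hφbot⟩ :=
      Submodule.exists_dual_map_eq_bot_of_lt_top (lt_top_iff_ne_top.mpr hne) inferInstance
    set w : κ → F := fun a => φ (fun j => if a = j then 1 else 0) with hwdef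
    have hrep : ∀ v : κ → F, φ v = dotProduct v w := by
      intro v
      conv_lhs => rw [pi_eq_sum_univ v, map_sum]
      rw [dotProduct]
      refine Finset.sum_congr rfl fun a _ => ?_
      rw [map_smul, smul_eq_mul]
    have hw0 : w = 0 := by
      apply hinj
      funext i
      rw [Matrix.mulVec, Pi.zero_apply, ← hrep (M i)]
      have hmem : M i ∈ Submodule.span F rows := Submodule.subset_span ⟨i, rfl⟩
      have := Submodule.mem_map_of_mem (f := φ) hmem
      rw [hφbot, Submodule.mem_bot] at this
      exact this
    refine hφne (LinearMap.ext fun v => ?_)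
    rw [hrep v, hw0, dotProduct_zero, LinearMap.zero_apply]
  obtain ⟨b, hbsub, hbspan, hbli⟩ := exists_linearIndependent F rows
  rw [hspan] at hbspan
  have hbfin : b.Finite := (Set.finite_range _).subset hbsub
  have : Fintype b := hbfin.fintype
  let B : Module.Basis b F (κ → F) := Module.Basis.mk hbli (by rw [Subtype.range_coe, hbspan])
  have hcard : Fintype.card κ = Fintype.card b := by
    rw [← Module.finrank_fintype_fun_eq_card F (η := κ), Module.finrank_eq_card_basis B]
  let e : κ ≃ b := Fintype.equivOfCardEq hcard
  have hchoose : ∀ x : b, ∃ i : ι, M i = (x : κ → F) := fun x => hbsub x.2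
  set ir : κ → ι := fun a => (hchoose (e a)).choose with hirdef
  have hir : ∀ a, M (ir a) = ((e a : b) : κ → F) := fun a => (hchoose (e a)).choose_spec
  refine ⟨ir, ?_⟩
  let pb := Pi.basisFun F κ
  let B' : Module.Basis κ F (κ → F) := B.reindex e.symm
  have hinv : Invertible (pb.toMatrix B') := pb.invertibleToMatrix B'
  have hdet : (pb.toMatrix B').det ≠ 0 :=
    IsUnit.ne_zero (Matrix.isUnit_det_of_invertible _)
  have heq : (M.submatrix ir id).transpose = pb.toMatrix B' := by
    ext a c
    rw [Module.Basis.toMatrix_apply]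
    show M (ir c) a = pb.repr (B' c) a
    rw [hir c]
    have hB' : B' c = ((e c : b) : κ → F) := by
      rw [Module.Basis.reindex_apply, Equiv.symm_symm, Module.Basis.mk_apply]
    rw [hB', Pi.basisFun_repr]
  rw [← Matrix.det_transpose, heq]
  exact hdet

theorem mulVec_eq_zero_of_det {κ : Type} [Fintype κ] [DecidableEq κ]
    (M : Matrix κ κ F) (hdet : M.det ≠ 0) (v : κ → F) (hv : M.mulVec v = 0) :
    v = 0 := by
  have hiv : M⁻¹ * M = 1 := Matrix.nonsing_inv_mul M (isUnit_iff_ne_zero.mpr hdet)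
  calc v = (1 : Matrix κ κ F).mulVec v := by rw [Matrix.one_mulVec]
    _ = (M⁻¹ * M).mulVec v := by rw [hiv]
    _ = M⁻¹.mulVec (M.mulVec v) := by rw [Matrix.mulVec_mulVec]
    _ = 0 := by rw [hv, Matrix.mulVec_zero]

end LinAlg
section Transfer

variable {N s : ℕ}

noncomputable def Sset (N D : ℕ) : Finset (Fin N →₀ ℕ) :=
  Finset.filter (fun α => α.degree = D)
    (Finset.Iic (Finsupp.equivFunOnFinite.symm (fun _ => D)))

theorem mem_Sset {D : ℕ} (α : Fin N →₀ ℕ) : α ∈ Sset N D ↔ α.degree = D := by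
  rw [Sset, Finset.mem_filter, Finset.mem_Iic]
  constructor
  · exact fun h => h.2
  · intro h
    refine ⟨?_, h⟩
    intro i
    calc α i ≤ α.degree := Finsupp.le_degree i α
      _ = D := h
      _ = (Finsupp.equivFunOnFinite.symm (fun _ => D)) i := rfl

noncomputable def Bset (N m : ℕ) : Finset (Fin N →₀ ℕ) :=
  Finset.filter (fun β => β.degree < m)
    (Finset.Iic (Finsupp.equivFunOnFinite.symm (fun _ => m)))

theorem mem_Bset {m : ℕ} (β : Fin N →₀ ℕ) : β ∈ Bset N m ↔ β.degree < m := by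
  rw [Bset, Finset.mem_filter, Finset.mem_Iic]
  constructor
  · exact fun h => h.2
  · intro h
    refine ⟨?_, h⟩
    intro i
    calc β i ≤ β.degree := Finsupp.le_degree i β
      _ ≤ m := by omega
      _ = (Finsupp.equivFunOnFinite.symm (fun _ => m)) i := rfl

theorem comps_lt_iff_coeffs (h : MvPolynomial (Fin N) F) (m : ℕ) :
    (∀ d < m, homogeneousComponent d h = 0) ↔
      (∀ β : Fin N →₀ ℕ, β.degree < m → coeff β h = 0) := by
  constructor
  · intro hc β hβ
    have := congrArg (coeff β) (hc β.degree hβ)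
    rwa [coeff_homogeneousComponent, if_pos rfl, coeff_zero] at this
  · intro hc d hd
    ext γ
    rw [coeff_homogeneousComponent, coeff_zero]
    by_cases hγ : γ.degree = d
    · rw [if_pos hγ]
      exact hc γ (by omega)
    · rw [if_neg hγ]

/-- The universal (generic-point) shift. -/
noncomputable def shiftU (s N : ℕ) (i : Fin s) :
    MvPolynomial (Fin N) F →ₐ[F]
      MvPolynomial (Fin N) (MvPolynomial (Fin s × Fin N) F) :=
  aeval (fun j => X j + C (X (i, j)))

theorem map_shiftU (P : Fin s → Fin N → F) (i : Fin s)
    (h : MvPolynomial (Fin N) F) :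
    MvPolynomial.map (eval (fun q : Fin s × Fin N => P q.1 q.2))
      (shiftU s N i h) = psh (P i) h := by
  have hre : ((MvPolynomial.map (eval (fun q : Fin s × Fin N => P q.1 q.2))).comp
      (shiftU s N i (F := F)).toRingHom)
      = (psh (P i)).toRingHom := by
    apply MvPolynomial.ringHom_ext
    · intro r
      simp [shiftU, psh, algebraMap_eq]
    · intro j
      simp [shiftU, psh]
  exact congrArg (fun (ψ : MvPolynomial (Fin N) F →+*
    MvPolynomial (Fin N) F) => ψ h) hre

theorem coeff_psh_expand (p : Fin N → F) (f : MvPolynomial (Fin N) F) (D : ℕ)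
    (hsupp : f.support ⊆ Sset N D) (β : Fin N →₀ ℕ) :
    coeff β (psh p f)
      = ∑ α ∈ Sset N D, coeff α f * coeff β (psh p (monomial α 1)) := by
  have hf : f = ∑ α ∈ Sset N D, monomial α (coeff α f) := by
    conv_lhs => rw [f.as_sum]
    apply Finset.sum_subset hsupp
    intro α _ hα
    rw [notMem_support_iff.mp hα, map_zero]
  conv_lhs => rw [hf]
  rw [map_sum, coeff_sum]
  refine Finset.sum_congr rfl fun α _ => ?_
  have hmono : (monomial α (coeff α f) : MvPolynomial (Fin N) F)
      = C (coeff α f) * monomial α 1 := by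
    rw [C_mul_monomial, mul_one]
  rw [hmono, map_mul, psh_C, coeff_C_mul]

/-- The semicontinuity transfer: if the order-`m` vanishing conditions at the
points of `Pstar` only admit the zero degree-`D` form, the same holds for every
configuration in an explicit nonempty Zariski-open set. -/
theorem transfer (m D : ℕ) (Pstar : Fin s → Fin N → F)
    (hstar : ∀ f : MvPolynomial (Fin N) F, f.IsHomogeneous D →
      (∀ (i : Fin s) d, d < m → homogeneousComponent d (psh (Pstar i) f) = 0) →
        f = 0) :
    ∃ H : MvPolynomial (Fin s × Fin N) F, H ≠ 0 ∧
      ∀ P : Fin s → Fin N → F, eval (fun q => P q.1 q.2) H ≠ 0 →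
        ∀ f : MvPolynomial (Fin N) F, f.IsHomogeneous D →
          (∀ (i : Fin s) d, d < m →
            homogeneousComponent d (psh (P i) f) = 0) → f = 0 := by
  classical
  set Mat : (Fin s → Fin N → F) → Matrix (Fin s × {β // β ∈ Bset N m})
      {α // α ∈ Sset N D} F :=
    fun P c α => coeff (c.2 : Fin N →₀ ℕ)
      (psh (P c.1) (monomial (α : Fin N →₀ ℕ) 1)) with hMat
  set Ent : Matrix (Fin s × {β // β ∈ Bset N m}) {α // α ∈ Sset N D}
      (MvPolynomial (Fin s × Fin N) F) :=
    fun c α => coeff (c.2 : Fin N →₀ ℕ)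
      (shiftU s N c.1 (monomial (α : Fin N →₀ ℕ) 1)) with hEnt
  have hEntEval : ∀ (P : Fin s → Fin N → F) c α,
      eval (fun q => P q.1 q.2) (Ent c α) = Mat P c α := by
    intro P c α
    show eval (fun q => P q.1 q.2)
        (coeff (c.2 : Fin N →₀ ℕ) (shiftU s N c.1 (monomial (α : Fin N →₀ ℕ) 1)))
      = coeff (c.2 : Fin N →₀ ℕ) (psh (P c.1) (monomial (α : Fin N →₀ ℕ) 1))
    rw [← map_shiftU P c.1, MvPolynomial.coeff_map]
  set toPoly : ({α // α ∈ Sset N D} → F) → MvPolynomial (Fin N) F :=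
    fun v => ∑ α : {α // α ∈ Sset N D}, monomial (α : Fin N →₀ ℕ) (v α)
    with htoPoly
  have hcoeff_toPoly : ∀ v (α : {α // α ∈ Sset N D}),
      coeff (α : Fin N →₀ ℕ) (toPoly v) = v α := by
    intro v α
    rw [htoPoly]
    rw [coeff_sum]
    rw [Finset.sum_eq_single α]
    · rw [coeff_monomial, if_pos rfl]
    · intro α' _ hne
      rw [coeff_monomial, if_neg (fun h => hne (Subtype.ext h))]
    · intro h; exact absurd (Finset.mem_univ α) h
  have htP_homog : ∀ v, (toPoly v).IsHomogeneous D := by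
    intro v
    apply MvPolynomial.IsHomogeneous.sum
    intro α _
    exact isHomogeneous_monomial _ ((mem_Sset _).mp α.2)
  have hsupp_of_homog : ∀ f : MvPolynomial (Fin N) F, f.IsHomogeneous D →
      f.support ⊆ Sset N D := by
    intro f hf γ hγ
    apply (mem_Sset γ).mpr
    rw [Finsupp.degree_eq_weight_one]
    exact hf (mem_support_iff.mp hγ)
  have hrel : ∀ (P : Fin s → Fin N → F) (f : MvPolynomial (Fin N) F),
      f.IsHomogeneous D → ∀ c,
      Matrix.mulVec (Mat P) (fun α => coeff (α : Fin N →₀ ℕ) f) c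
        = coeff (c.2 : Fin N →₀ ℕ) (psh (P c.1) f) := by
    intro P f hf c
    rw [coeff_psh_expand (P c.1) f D (hsupp_of_homog f hf) (c.2 : Fin N →₀ ℕ)]
    rw [Matrix.mulVec, dotProduct, ← Finset.sum_coe_sort (Sset N D)]
    refine Finset.sum_congr rfl fun α _ => ?_
    rw [hMat, mul_comm]
  have hinjstar : ∀ v, (Mat Pstar).mulVec v = 0 → v = 0 := by
    intro v hv
    have hveq : (fun α : {α // α ∈ Sset N D} => coeff (α : Fin N →₀ ℕ) (toPoly v))
        = v := funext (hcoeff_toPoly v)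
    have hfv : toPoly v = 0 := by
      apply hstar _ (htP_homog v)
      intro i d hd
      apply (comps_lt_iff_coeffs _ m).mpr _ d hd
      intro β hβ
      have hc := congrFun hv (i, ⟨β, (mem_Bset β).mpr hβ⟩)
      rw [← hveq] at hc
      rw [hrel Pstar (toPoly v) (htP_homog v)] at hc
      exact hc
    funext α
    rw [Pi.zero_apply, ← hcoeff_toPoly v α, hfv, coeff_zero]
  obtain ⟨ir, hdet⟩ := exists_good_submatrix (Mat Pstar) hinjstar
  have hevaldet : ∀ P : Fin s → Fin N → F,
      eval (fun q => P q.1 q.2) ((Ent.submatrix ir id).det)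
        = ((Mat P).submatrix ir id).det := by
    intro P
    rw [RingHom.map_det]
    congr 1
    ext x α
    rw [RingHom.mapMatrix_apply, Matrix.map_apply, Matrix.submatrix_apply,
      Matrix.submatrix_apply]
    exact hEntEval P (ir x) α
  refine ⟨(Ent.submatrix ir id).det, ?_, ?_⟩
  · intro h0
    apply hdet
    rw [← hevaldet Pstar, h0, map_zero]
  · intro P hHP f hf hcomps
    set v : {α // α ∈ Sset N D} → F := fun α => coeff (α : Fin N →₀ ℕ) f with hvdef
    have hdetP : ((Mat P).submatrix ir id).det ≠ 0 := by
      rw [← hevaldet P]; exact hHP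
    have hvmul : ((Mat P).submatrix ir id).mulVec v = 0 := by
      funext x
      have hsub : ((Mat P).submatrix ir id).mulVec v x = (Mat P).mulVec v (ir x) := rfl
      rw [hsub, hvdef, hrel P f hf (ir x), Pi.zero_apply]
      exact (comps_lt_iff_coeffs _ m).mp (fun d hd => hcomps (ir x).1 d hd)
        ((ir x).2 : Fin N →₀ ℕ) ((mem_Bset _).mp ((ir x).2).2)
    have hv0 : v = 0 := mulVec_eq_zero_of_det _ hdetP v hvmul
    ext γ
    rw [coeff_zero]
    by_cases hγ : γ ∈ f.support
    · have hγS := hsupp_of_homog f hf hγ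
      have := congrFun hv0 ⟨γ, hγS⟩
      rwa [Pi.zero_apply] at this
    · exact notMem_support_iff.mp hγ

end Transfer
theorem exists_eval_ne_zero' {σ : Type} [Infinite F] (p : MvPolynomial σ F)
    (hp : p ≠ 0) : ∃ x : σ → F, eval x p ≠ 0 := by
  by_contra h
  push_neg at h
  apply hp
  apply MvPolynomial.funext (q := 0)
  intro x
  rw [h x, map_zero]

end NagataAux

open NagataAux in
/-- Inductive step of Theorem 2.1: if for every `m ≥ 1` no nonzero hypersurface of
degree `km - 1` in `ℙ^(n-1)` passes through `k^(n-1)` general points with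
multiplicity `m` (i.e. lies in the `m`-th power of each point's ideal), then for
every `m ≥ 1` no nonzero hypersurface of degree `km - 1` in `ℙⁿ` passes through
`kⁿ` general points with multiplicity `m`. -/
theorem stmt_14 (F : Type) [Field F] [CharZero F] (n k : ℕ) (hn : 2 ≤ n) (hk : 1 ≤ k)
    (ih : ∀ m : ℕ, 1 ≤ m →
      GeneralHolds F n (k ^ (n - 1)) (fun P =>
        (∀ i, P i ≠ 0) →
          ∀ f : MvPolynomial (Fin n) F,
            MvPolynomial.IsHomogeneous f (k * m - 1) →
              (∀ i, f ∈ (pointIdeal (P i)) ^ m) → f = 0)) :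
    ∀ m : ℕ, 1 ≤ m →
      GeneralHolds F (n + 1) (k ^ n) (fun P =>
        (∀ i, P i ≠ 0) →
          ∀ f : MvPolynomial (Fin (n + 1)) F,
            MvPolynomial.IsHomogeneous f (k * m - 1) →
              (∀ i, f ∈ (pointIdeal (P i)) ^ m) → f = 0) := by
  classical
  intro m hm
  simp only [GeneralHolds] at ih ⊢
  choose Hw hHwne hHwprop using ih
  -- the parameter polynomial cutting out good `R` configurations in ℙ^(n-1)
  set pv : Fin n := ⟨n - 1, by omega⟩ with hpvdef
  set G : MvPolynomial (Fin (k ^ (n - 1)) × Fin n) F :=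
    (∏ x ∈ (Finset.Icc 1 m).attach, Hw x.1 (Finset.mem_Icc.mp x.2).1) *
      ∏ r : Fin (k ^ (n - 1)), X (r, pv) with hGdef
  have hGne : G ≠ 0 := by
    apply mul_ne_zero
    · exact Finset.prod_ne_zero_iff.mpr fun x _ => hHwne x.1 (Finset.mem_Icc.mp x.2).1
    · exact Finset.prod_ne_zero_iff.mpr fun r _ => MvPolynomial.X_ne_zero _
  obtain ⟨x, hxG⟩ := exists_eval_ne_zero' G hGne
  set R : Fin (k ^ (n - 1)) → Fin n → F := fun r j => x (r, j) with hRdef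
  have hxeq : (fun q : Fin (k ^ (n - 1)) × Fin n => R q.1 q.2) = x := by
    funext q; rfl
  have hRH : ∀ m' (h1 : 1 ≤ m'), m' ≤ m →
      MvPolynomial.eval (fun q => R q.1 q.2) (Hw m' h1) ≠ 0 := by
    intro m' h1 hle hzero
    apply hxG
    rw [hGdef, map_mul, map_prod]
    apply mul_eq_zero_of_left
    apply Finset.prod_eq_zero (Finset.mem_attach _ ⟨m', Finset.mem_Icc.mpr ⟨h1, hle⟩⟩)
    rw [← hxeq]
    exact hzero
  have hRpv : ∀ r, R r pv ≠ 0 := by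
    intro r hzero
    apply hxG
    rw [hGdef, map_mul, map_prod]
    apply mul_eq_zero_of_right
    rw [map_prod]
    apply Finset.prod_eq_zero (Finset.mem_univ r)
    rw [eval_X]
    exact hzero
  have hRne : ∀ r, R r ≠ 0 := by
    intro r h0
    exact hRpv r (by rw [h0]; rfl)
  -- the scalars
  set c : Fin k → F := fun j => ((j : ℕ) : F) with hcdef
  have hc : Function.Injective c := by
    intro a b hab
    exact Fin.val_injective (Nat.cast_injective hab)
  -- the index equivalence
  have hkn : k ^ n = k * k ^ (n - 1) := by
    calc k ^ n = k ^ ((n - 1) + 1) := by congr 1; omega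
      _ = k * k ^ (n - 1) := by rw [pow_succ, mul_comm]
  set e : Fin (k ^ n) ≃ Fin k × Fin (k ^ (n - 1)) :=
    (finCongr hkn).trans finProdFinEquiv.symm with hedef
  -- the special configuration
  set Pstar : Fin (k ^ n) → Fin (n + 1) → F :=
    fun i => Fin.cons (c (e i).1 * R (e i).2 pv) (R (e i).2) with hPstardef
  -- the inductive hypothesis specialized to `R`
  have hihR : ∀ m', 1 ≤ m' → m' ≤ m →
      ∀ h : MvPolynomial (Fin n) F, h.IsHomogeneous (k * m' - 1) →
        (∀ r, h ∈ (pointIdeal (R r)) ^ m') → h = 0 := by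
    intro m' h1 hle h hh hmemh
    exact hHwprop m' h1 R (hRH m' h1 hle) hRne h hh hmemh
  -- the special configuration works
  have hstar : ∀ f : MvPolynomial (Fin (n + 1)) F, f.IsHomogeneous (k * m - 1) →
      (∀ (i : Fin (k ^ n)) d, d < m →
        homogeneousComponent d (psh (Pstar i) f) = 0) → f = 0 := by
    intro f hf hcomps
    apply special_config hk m pv R hRpv c hc hihR m hm le_rfl f hf
    intro j r
    have hmem := mem_pow_of_mult (Pstar (e.symm (j, r)))
      (by
        intro h0
        apply hRpv ((e (e.symm (j, r))).2)
        have h2 := congrFun h0 pv.succ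
        have h3 : Pstar (e.symm (j, r)) pv.succ = R (e (e.symm (j, r))).2 pv :=
          Fin.cons_succ _ _ _
        rw [h3] at h2
        exact h2)
      f (k * m - 1) m hf (fun d hd => hcomps (e.symm (j, r)) d hd)
    have h1 : e (e.symm (j, r)) = (j, r) := e.apply_symm_apply (j, r)
    have heI : Pstar (e.symm (j, r)) = Fin.cons (c j * R r pv) (R r) := by
      simp only [hPstardef]
      rw [h1]
    rwa [heI] at hmem
  obtain ⟨H, hHne, hHprop⟩ := transfer m (k * m - 1) Pstar hstar
  refine ⟨H, hHne, ?_⟩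
  intro P hP _ f hf hmem
  apply hHprop P hP f hf
  intro i d hd
  exact mult_of_mem_pow (P i) m f (hmem i) d hd
end
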